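/- arXiv:2307.06265 — 3 statements merged into one kernel-verified Lean document; each statement's English description precedes it below -/
import Mathlib

section
/- (Equivalence of inverse harmonicity and the elliptic-grid-generation equations) Let Ω̂, Ω ⊂ ℝ² be open sets and let x : Ω̂ → Ω be a C² diffeomorphism whose Jacobian determinant det J(x)(ξ) is strictly positive for every ξ ∈ Ω̂. Then both components of the inverse map x⁻¹ : Ω → Ω̂ are harmonic on Ω (Δ(x⁻¹)ᵢ = 0 on Ω for i = 1, 2) if and only if x satisfies the quasilinear second-order nondivergence-form equations: for i ∈ {1, 2} and all ξ ∈ Ω̂, A(∂x)(ξ) : H(xᵢ)(ξ) = 0, where H(xᵢ) denotes the Hessian matrix of second partial derivatives of the component xᵢ with respect to ξ. -/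
open Matrix

/-- The Jacobian matrix of a map `x : ℝ² → ℝ²` at a point. -/
noncomputable def jacMat (x : (Fin 2 → ℝ) → (Fin 2 → ℝ)) (ξ : Fin 2 → ℝ) :
    Matrix (Fin 2) (Fin 2) ℝ :=
  Matrix.of fun i j => fderiv ℝ (fun q => x q i) ξ (Pi.single j 1)

/-- The Hessian matrix of a scalar function at a point. -/
noncomputable def hessMat (f : (Fin 2 → ℝ) → ℝ) (p : Fin 2 → ℝ) :
    Matrix (Fin 2) (Fin 2) ℝ :=
  Matrix.of fun i j => fderiv ℝ (fun q => fderiv ℝ f q (Pi.single i 1)) p (Pi.single j 1)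

/-- The matrix `A(J) = [[g₂₂, −g₁₂], [−g₁₂, g₁₁]]` built from the metric tensor `G = JᵀJ`. -/
def Amat (J : Matrix (Fin 2) (Fin 2) ℝ) : Matrix (Fin 2) (Fin 2) ℝ :=
  !![(Jᵀ * J) 1 1, -((Jᵀ * J) 0 1); -((Jᵀ * J) 0 1), (Jᵀ * J) 0 0]

/-- The Frobenius inner product of two `2×2` matrices. -/
def frobInner (M N : Matrix (Fin 2) (Fin 2) ℝ) : ℝ :=
  ∑ i, ∑ j, M i j * N i j

/-!
Differentiating `y ∘ x = id` once gives `J(y)(x ξ) J(x)(ξ) = 1`, and differentiating this identity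
again gives `J(x)ᵀ H(yᵢ)(x ξ) J(x) = -∑ₐ J(y)ᵢₐ H(xₐ)`. Since `A(J) = adj J (adj J)ᵀ`, we have
`J A(J) Jᵀ = (det J)² 1`, so pairing with `A(J(x))` yields
`(det J)² (Δyᵢ)(x ξ) = -∑ₐ J(y)ᵢₐ (A(∂x) : H(xₐ))`. As `J(y)` and `det J` are invertible, the
Laplacians vanish for both `i` exactly when both `A(∂x) : H(xₐ)` do.
-/

open Filter Topology

lemma ContDiffAt.differentiableAt_fderiv_apply {𝕜 E F : Type*} [NontriviallyNormedField 𝕜]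
    [NormedAddCommGroup E] [NormedSpace 𝕜 E] [NormedAddCommGroup F] [NormedSpace 𝕜 F]
    {f : E → F} {p : E} (hf : ContDiffAt 𝕜 2 f p) (v : E) :
    DifferentiableAt 𝕜 (fun q => fderiv 𝕜 f q v) p :=
  ((hf.fderiv_right (m := 1) le_rfl).differentiableAt one_ne_zero).clm_apply
    (differentiableAt_const v)

lemma Matrix.eq_zero_iff_of_smul_eq_neg_mulVec {n 𝕜 : Type*} [Fintype n] [DecidableEq n]
    [Field 𝕜] {K J : Matrix n n 𝕜} (hKJ : K * J = 1) {c : 𝕜} (hc : c ≠ 0) {u v : n → 𝕜}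
    (h : c • u = -(K *ᵥ v)) : u = 0 ↔ v = 0 := by
  constructor
  · intro hu
    have hKv : K *ᵥ v = 0 := by simpa [hu] using h
    rw [← one_mulVec v, ← mul_eq_one_comm.mp hKJ, ← mulVec_mulVec, hKv, mulVec_zero]
  · rintro rfl
    simpa [hc] using h

lemma frobInner_neg (M N : Matrix (Fin 2) (Fin 2) ℝ) : frobInner M (-N) = -frobInner M N := by
  simp only [frobInner, Matrix.neg_apply, mul_neg, Finset.sum_neg_distrib]

lemma frobInner_sum_smul {ι : Type*} (s : Finset ι) (M : Matrix (Fin 2) (Fin 2) ℝ) (c : ι → ℝ)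
    (N : ι → Matrix (Fin 2) (Fin 2) ℝ) :
    frobInner M (∑ a ∈ s, c a • N a) = ∑ a ∈ s, c a * frobInner M (N a) := by
  simp only [frobInner, Matrix.sum_apply, Matrix.smul_apply, smul_eq_mul, Fin.sum_univ_two,
    Finset.mul_sum, ← Finset.sum_add_distrib]
  exact Finset.sum_congr rfl fun a _ => by ring

lemma frobInner_Amat_transpose_mul_mul (J H : Matrix (Fin 2) (Fin 2) ℝ) :
    frobInner (Amat J) (Jᵀ * H * J) = J.det ^ 2 * H.trace := by
  simp only [frobInner, Amat, mul_apply, transpose_apply, Fin.sum_univ_two, of_apply, cons_val',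
    cons_val_fin_one, cons_val_zero, cons_val_one, det_fin_two, trace_fin_two]
  ring

section Jacobian

variable {f : (Fin 2 → ℝ) → (Fin 2 → ℝ)} {ξ : Fin 2 → ℝ}

lemma jacMat_apply_of_differentiableAt (hf : DifferentiableAt ℝ f ξ) (b k : Fin 2) :
    jacMat f ξ b k = fderiv ℝ f ξ (Pi.single k 1) b := by
  rw [jacMat, of_apply, fderiv_apply hf]
  rfl

lemma fderiv_comp_apply_single {g : (Fin 2 → ℝ) → ℝ} (hg : DifferentiableAt ℝ g (f ξ))
    (hf : DifferentiableAt ℝ f ξ) (k : Fin 2) :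
    fderiv ℝ (fun q => g (f q)) ξ (Pi.single k 1)
      = ∑ b, fderiv ℝ g (f ξ) (Pi.single b 1) * jacMat f ξ b k := by
  rw [fderiv_fun_comp ξ hg hf, ContinuousLinearMap.comp_apply]
  conv_lhs => rw [← Finset.univ_sum_single (fderiv ℝ f ξ (Pi.single k 1)), map_sum]
  refine Finset.sum_congr rfl fun b _ => ?_
  rw [jacMat_apply_of_differentiableAt hf, mul_comm, ← smul_eq_mul, ← map_smul, ← Pi.single_smul',
    smul_eq_mul, mul_one]

lemma jacMat_comp {g : (Fin 2 → ℝ) → (Fin 2 → ℝ)} (hg : DifferentiableAt ℝ g (f ξ))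
    (hf : DifferentiableAt ℝ f ξ) :
    jacMat (fun q => g (f q)) ξ = jacMat g (f ξ) * jacMat f ξ := by
  ext i k
  exact fderiv_comp_apply_single (differentiableAt_pi.mp hg i) hf k

lemma jacMat_id : jacMat id ξ = 1 := by
  ext i k
  rw [jacMat_apply_of_differentiableAt differentiableAt_id, fderiv_id, one_apply,
    ContinuousLinearMap.id_apply, Pi.single_apply, eq_comm]

lemma Filter.EventuallyEq.jacMat_eq {g : (Fin 2 → ℝ) → (Fin 2 → ℝ)} (h : f =ᶠ[𝓝 ξ] g) :
    jacMat f ξ = jacMat g ξ := by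
  ext i k
  have hi : (fun q => f q i) =ᶠ[𝓝 ξ] fun q => g q i := h.fun_comp (· i)
  rw [jacMat, jacMat, of_apply, of_apply, hi.fderiv_eq]

lemma jacMat_mul_jacMat_of_leftInverse {y : (Fin 2 → ℝ) → (Fin 2 → ℝ)}
    (hyf : (fun q => y (f q)) =ᶠ[𝓝 ξ] id) (hy : DifferentiableAt ℝ y (f ξ))
    (hf : DifferentiableAt ℝ f ξ) :
    jacMat y (f ξ) * jacMat f ξ = 1 := by
  rw [← jacMat_comp hy hf, hyf.jacMat_eq, jacMat_id]

end Jacobian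

section LeftInverse

variable {x y : (Fin 2 → ℝ) → (Fin 2 → ℝ)} {ξ : Fin 2 → ℝ}

lemma eventually_jacMat_mul_jacMat_of_leftInverse (hyx : (fun q => y (x q)) =ᶠ[𝓝 ξ] id)
    (hx : ContDiffAt ℝ 1 x ξ) (hy : ContDiffAt ℝ 1 y (x ξ)) :
    ∀ᶠ q in 𝓝 ξ, jacMat y (x q) * jacMat x q = 1 := by
  have hy_near : ∀ᶠ q in 𝓝 ξ, ContDiffAt ℝ 1 y (x q) :=
    hx.continuousAt.eventually (hy.eventually (by simp))
  filter_upwards [hyx.eventuallyEq_nhds, hx.eventually (by simp), hy_near] with q hyxq hxq hyq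
  exact jacMat_mul_jacMat_of_leftInverse hyxq (hyq.differentiableAt one_ne_zero)
    (hxq.differentiableAt one_ne_zero)

lemma transpose_jacMat_mul_hessMat_mul_jacMat (hyx : (fun q => y (x q)) =ᶠ[𝓝 ξ] id)
    (hx : ContDiffAt ℝ 2 x ξ) (hy : ContDiffAt ℝ 2 y (x ξ)) (i : Fin 2) :
    (jacMat x ξ)ᵀ * hessMat (fun p => y p i) (x ξ) * jacMat x ξ
      = -∑ a, jacMat y (x ξ) i a • hessMat (fun q => x q a) ξ := by
  have hyi : ContDiffAt ℝ 2 (fun p => y p i) (x ξ) := contDiffAt_pi.mp hy i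
  have hxd : DifferentiableAt ℝ x ξ := hx.differentiableAt two_ne_zero
  have hdiff_jacMat_y : ∀ a, DifferentiableAt ℝ (fun q => jacMat y (x q) i a) ξ := fun a =>
    (hyi.differentiableAt_fderiv_apply _).comp ξ hxd
  have hdiff_jacMat_x : ∀ a j, DifferentiableAt ℝ (fun q => jacMat x q a j) ξ := fun a j =>
    (contDiffAt_pi.mp hx a).differentiableAt_fderiv_apply _
  have hderiv_jacMat_y : ∀ a k, fderiv ℝ (fun q => jacMat y (x q) i a) ξ (Pi.single k 1)
      = ∑ b, hessMat (fun p => y p i) (x ξ) a b * jacMat x ξ b k := fun a k =>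
    fderiv_comp_apply_single (hyi.differentiableAt_fderiv_apply _) hxd k
  ext j k
  have hconst : (fun q => ∑ a, jacMat y (x q) i a * jacMat x q a j) =ᶠ[𝓝 ξ]
      fun _ => (1 : Matrix (Fin 2) (Fin 2) ℝ) i j := by
    filter_upwards [eventually_jacMat_mul_jacMat_of_leftInverse hyx (hx.of_le one_le_two)
      (hy.of_le one_le_two)] with q hq
    rw [← hq, mul_apply]
  have hderiv : fderiv ℝ (fun q => ∑ a, jacMat y (x q) i a * jacMat x q a j) ξ (Pi.single k 1)
      = 0 := by
    rw [hconst.fderiv_eq, fderiv_const_apply, _root_.zero_apply]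
  rw [fderiv_fun_sum (fun a _ => (hdiff_jacMat_y a).fun_mul (hdiff_jacMat_x a j)), _root_.sum_apply] at hderiv
  simp only [fderiv_fun_mul (hdiff_jacMat_y _) (hdiff_jacMat_x _ j), _root_.add_apply, _root_.smul_apply, smul_eq_mul,
    hderiv_jacMat_y] at hderiv
  have hhess_x : ∀ a, hessMat (fun q => x q a) ξ j k
      = fderiv ℝ (fun q => jacMat x q a j) ξ (Pi.single k 1) := fun a => rfl
  rw [Matrix.neg_apply, Matrix.sum_apply]
  simp only [Matrix.smul_apply, smul_eq_mul, hhess_x, mul_apply, transpose_apply,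
    Fin.sum_univ_two] at hderiv ⊢
  linear_combination hderiv

lemma det_sq_mul_trace_hessMat_comp (hyx : (fun q => y (x q)) =ᶠ[𝓝 ξ] id)
    (hx : ContDiffAt ℝ 2 x ξ) (hy : ContDiffAt ℝ 2 y (x ξ)) (i : Fin 2) :
    (jacMat x ξ).det ^ 2 * (hessMat (fun p => y p i) (x ξ)).trace
      = -∑ a, jacMat y (x ξ) i a * frobInner (Amat (jacMat x ξ)) (hessMat (fun q => x q a) ξ) := by
  rw [← frobInner_Amat_transpose_mul_mul, transpose_jacMat_mul_hessMat_mul_jacMat hyx hx hy,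
    frobInner_neg, frobInner_sum_smul]

lemma trace_hessMat_comp_eq_zero_iff (hyx : (fun q => y (x q)) =ᶠ[𝓝 ξ] id)
    (hx : ContDiffAt ℝ 2 x ξ) (hy : ContDiffAt ℝ 2 y (x ξ)) :
    (∀ i, (hessMat (fun p => y p i) (x ξ)).trace = 0)
      ↔ ∀ i, frobInner (Amat (jacMat x ξ)) (hessMat (fun q => x q i) ξ) = 0 := by
  have hKJ := jacMat_mul_jacMat_of_leftInverse hyx (hy.differentiableAt two_ne_zero)
    (hx.differentiableAt two_ne_zero)
  have key := eq_zero_iff_of_smul_eq_neg_mulVec hKJ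
    (pow_ne_zero 2 (det_ne_zero_of_left_inverse hKJ))
    (u := fun i => (hessMat (fun p => y p i) (x ξ)).trace)
    (v := fun a => frobInner (Amat (jacMat x ξ)) (hessMat (fun q => x q a) ξ))
    (funext fun i => det_sq_mul_trace_hessMat_comp hyx hx hy i)
  simpa only [funext_iff, Pi.zero_apply] using key

end LeftInverse

theorem inverse_harmonicity_iff_EGG_general
    (Ωhat Ω : Set (Fin 2 → ℝ)) (hΩhat_open : IsOpen Ωhat) (hΩ_open : IsOpen Ω)
    (x y : (Fin 2 → ℝ) → (Fin 2 → ℝ))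
    (hx : ContDiffOn ℝ 2 x Ωhat) (hy : ContDiffOn ℝ 2 y Ω)
    (hbij : Set.BijOn x Ωhat Ω)
    (hinv_left : ∀ ξ ∈ Ωhat, y (x ξ) = ξ) :
    (∀ i : Fin 2, ∀ p ∈ Ω, ∑ a : Fin 2, hessMat (fun q => y q i) p a a = 0)
      ↔ (∀ i : Fin 2, ∀ ξ ∈ Ωhat,
          frobInner (Amat (jacMat x ξ)) (hessMat (fun q => x q i) ξ) = 0) := by
  have hloc : ∀ ξ ∈ Ωhat, (∀ i, (hessMat (fun p => y p i) (x ξ)).trace = 0)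
      ↔ ∀ i, frobInner (Amat (jacMat x ξ)) (hessMat (fun q => x q i) ξ) = 0 := fun ξ hξ =>
    trace_hessMat_comp_eq_zero_iff
      (eventually_of_mem (hΩhat_open.mem_nhds hξ) hinv_left)
      (hx.contDiffAt (hΩhat_open.mem_nhds hξ))
      (hy.contDiffAt (hΩ_open.mem_nhds (hbij.mapsTo hξ)))
  constructor
  · intro hharm i ξ hξ
    exact (hloc ξ hξ).mp (fun i => hharm i _ (hbij.mapsTo hξ)) i
  · intro hEGG i p hp
    obtain ⟨ξ, hξ, rfl⟩ := hbij.surjOn hp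
    exact (hloc ξ hξ).mpr (fun i => hEGG i ξ hξ) i

/-- **Equivalence of inverse harmonicity and the elliptic-grid-generation equations.**
For a C² diffeomorphism `x : Ω̂ → Ω` with everywhere positive Jacobian determinant, both
components of the inverse map are harmonic on `Ω` if and only if `x` satisfies the
nondivergence-form equations `A(∂x) : H(xᵢ) = 0` on `Ω̂` for `i = 1, 2`. -/
theorem inverse_harmonicity_iff_EGG
    (Ωhat Ω : Set (Fin 2 → ℝ)) (hΩhat_open : IsOpen Ωhat) (hΩ_open : IsOpen Ω)
    (x y : (Fin 2 → ℝ) → (Fin 2 → ℝ))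
    (hx : ContDiffOn ℝ 2 x Ωhat) (hy : ContDiffOn ℝ 2 y Ω)
    (hbij : Set.BijOn x Ωhat Ω)
    (hinv_left : ∀ ξ ∈ Ωhat, y (x ξ) = ξ) (hinv_right : ∀ p ∈ Ω, x (y p) = p)
    (hdet : ∀ ξ ∈ Ωhat, 0 < (jacMat x ξ).det) :
    (∀ i : Fin 2, ∀ p ∈ Ω, ∑ a : Fin 2, hessMat (fun q => y q i) p a a = 0)
      ↔ (∀ i : Fin 2, ∀ ξ ∈ Ωhat,
          frobInner (Amat (jacMat x ξ)) (hessMat (fun q => x q i) ξ) = 0) :=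
  inverse_harmonicity_iff_EGG_general Ωhat Ω hΩhat_open hΩ_open x y hx hy hbij hinv_left
end

section
/- (Pullback of the Winslow functional) Let Ω̂, Ω ⊂ ℝ² be bounded open sets and x : Ω̂ → Ω a C¹ diffeomorphism with det J(x)(ξ) > 0 for every ξ ∈ Ω̂, such that ξ ↦ tr(G(ξ))/det J(x)(ξ) is integrable on Ω̂. Then the Dirichlet energy of the inverse map equals the pulled-back Winslow integral: ∫_Ω ‖∂(x⁻¹)/∂p (p)‖_F² dp = ∫_{Ω̂} tr(G(ξ))/det J(x)(ξ) dξ; equivalently, ∫_Ω tr(G⁻¹)(x⁻¹(p)) dp = ∫_{Ω̂} tr(G)/det J dξ, where tr(G⁻¹)(ξ) is the trace of the inverse of the metric tensor G(ξ). -/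
/-!
The change of variables `p = x ξ` turns `∫_Ω ‖J(x⁻¹)‖_F² dp` into `∫_{Ω̂} det J · ‖J⁻¹‖_F² dξ`,
since by the chain rule `J(x⁻¹)(x ξ) = J(x)(ξ)⁻¹`. Pointwise, `‖J⁻¹‖_F² = tr((JᵀJ)⁻¹) = tr(G⁻¹)`,
and for a `2 × 2` matrix `tr(A⁻¹) = tr A / det A`, so `det J · tr(G⁻¹) = det J · tr G / (det J)² =
tr G / det J`.
-/

open MeasureTheory Matrix

/-- The metric tensor `G = J(x)ᵀ J(x)` of a map at a point. -/
noncomputable def metricG (x : (Fin 2 → ℝ) → (Fin 2 → ℝ)) (ξ : Fin 2 → ℝ) :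
    Matrix (Fin 2) (Fin 2) ℝ :=
  (jacMat x ξ)ᵀ * jacMat x ξ

open Filter Topology

namespace Matrix

theorem sum_sq_entries_eq_trace_transpose_mul {m n R : Type*} [Fintype m] [Fintype n]
    [CommSemiring R] (A : Matrix m n R) :
    ∑ i, ∑ j, A i j ^ 2 = (Aᵀ * A).trace := by
  simp only [trace, diag, mul_apply, transpose_apply, sq]
  exact Finset.sum_comm

theorem sum_sq_entries_inv_eq_trace_inv_transpose_mul {n R : Type*} [Fintype n] [DecidableEq n]
    [CommRing R] (A : Matrix n n R) :
    ∑ i, ∑ j, A⁻¹ i j ^ 2 = (Aᵀ * A)⁻¹.trace := by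
  rw [sum_sq_entries_eq_trace_transpose_mul, trace_mul_comm, mul_inv_rev, transpose_nonsing_inv]

/-- With the junk value `0⁻¹ = 0` both sides vanish when `det A = 0`. -/
theorem trace_inv_fin_two {K : Type*} [Field K] (A : Matrix (Fin 2) (Fin 2) K) :
    A⁻¹.trace = A.trace / A.det := by
  rw [inv_def, adjugate_fin_two, Ring.inverse_eq_inv', trace_smul, trace_fin_two, trace_fin_two]
  simp only [of_apply, cons_val', cons_val_zero, cons_val_one, empty_val', cons_val_fin_one,
    smul_eq_mul]
  ring

theorem trace_inv_transpose_mul_fin_two {K : Type*} [Field K] (A : Matrix (Fin 2) (Fin 2) K) :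
    (Aᵀ * A)⁻¹.trace = (Aᵀ * A).trace / A.det ^ 2 := by
  rw [trace_inv_fin_two, det_mul, det_transpose, sq]

end Matrix

section Jacobian

variable {x y : (Fin 2 → ℝ) → (Fin 2 → ℝ)} {ξ : Fin 2 → ℝ}

theorem jacMat_eq_toMatrix' (hx : DifferentiableAt ℝ x ξ) :
    jacMat x ξ = LinearMap.toMatrix' (fderiv ℝ x ξ : (Fin 2 → ℝ) →ₗ[ℝ] (Fin 2 → ℝ)) := by
  ext i j
  have hcoord : (fun q => x q i) = ContinuousLinearMap.proj (R := ℝ) i ∘ x := rfl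
  rw [jacMat, of_apply, hcoord, fderiv_comp ξ (ContinuousLinearMap.proj i).differentiableAt hx,
    ContinuousLinearMap.fderiv]
  simp [LinearMap.toMatrix'_apply]

theorem det_fderiv_eq_det_jacMat (hx : DifferentiableAt ℝ x ξ) :
    (fderiv ℝ x ξ).det = (jacMat x ξ).det := by
  rw [jacMat_eq_toMatrix' hx, LinearMap.det_toMatrix', ContinuousLinearMap.det]

theorem jacMat_comp_s3 (hy : DifferentiableAt ℝ y (x ξ)) (hx : DifferentiableAt ℝ x ξ) :
    jacMat (y ∘ x) ξ = jacMat y (x ξ) * jacMat x ξ := by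
  rw [jacMat_eq_toMatrix' (hy.comp ξ hx), jacMat_eq_toMatrix' hy, jacMat_eq_toMatrix' hx,
    ← LinearMap.toMatrix'_comp, fderiv_comp ξ hy hx, ContinuousLinearMap.toLinearMap_comp]

theorem jacMat_of_eventuallyEq_id (h : x =ᶠ[𝓝 ξ] id) : jacMat x ξ = 1 := by
  rw [jacMat_eq_toMatrix' (differentiableAt_id.congr_of_eventuallyEq h), h.fderiv_eq, fderiv_id,
    ContinuousLinearMap.coe_id, LinearMap.toMatrix'_id]

theorem jacMat_eq_inv_of_eventually_leftInverse (hy : DifferentiableAt ℝ y (x ξ))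
    (hx : DifferentiableAt ℝ x ξ) (hleft : y ∘ x =ᶠ[𝓝 ξ] id) :
    jacMat y (x ξ) = (jacMat x ξ)⁻¹ :=
  (inv_eq_left_inv (by rw [← jacMat_comp_s3 hy hx, jacMat_of_eventuallyEq_id hleft])).symm

end Jacobian

theorem winslow_pullback_general
    (Ωhat Ω : Set (Fin 2 → ℝ))
    (hΩhat_open : IsOpen Ωhat) (hΩ_open : IsOpen Ω)
    (x y : (Fin 2 → ℝ) → (Fin 2 → ℝ))
    (hx : ContDiffOn ℝ 1 x Ωhat) (hy : ContDiffOn ℝ 1 y Ω)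
    (hbij : Set.BijOn x Ωhat Ω)
    (hinv_left : ∀ ξ ∈ Ωhat, y (x ξ) = ξ)
    (hdet : ∀ ξ ∈ Ωhat, 0 < (jacMat x ξ).det) :
    (∫ p in Ω, ∑ i : Fin 2, ∑ j : Fin 2, (jacMat y p i j) ^ 2)
        = (∫ ξ in Ωhat, (metricG x ξ).trace / (jacMat x ξ).det)
      ∧ (∫ p in Ω, ((metricG x (y p))⁻¹).trace)
        = (∫ ξ in Ωhat, (metricG x ξ).trace / (jacMat x ξ).det) := by
  have hxd : ∀ ξ ∈ Ωhat, DifferentiableAt ℝ x ξ := fun ξ hξ =>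
    (hx.differentiableOn one_ne_zero).differentiableAt (hΩhat_open.mem_nhds hξ)
  have hjac_inv : ∀ ξ ∈ Ωhat, jacMat y (x ξ) = (jacMat x ξ)⁻¹ := fun ξ hξ =>
    jacMat_eq_inv_of_eventually_leftInverse
      ((hy.differentiableOn one_ne_zero).differentiableAt (hΩ_open.mem_nhds (hbij.mapsTo hξ)))
      (hxd ξ hξ) (eventually_of_mem (hΩhat_open.mem_nhds hξ) hinv_left)
  have hfrobenius : ∀ p ∈ Ω, ∑ i, ∑ j, jacMat y p i j ^ 2 = ((metricG x (y p))⁻¹).trace := by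
    rintro _ hp
    obtain ⟨ξ, hξ, rfl⟩ := hbij.surjOn hp
    rw [hjac_inv ξ hξ, hinv_left ξ hξ, metricG, sum_sq_entries_inv_eq_trace_inv_transpose_mul]
  have henergy : (∫ p in Ω, ∑ i, ∑ j, jacMat y p i j ^ 2)
      = ∫ ξ in Ωhat, (metricG x ξ).trace / (jacMat x ξ).det := by
    rw [← hbij.image_eq, integral_image_eq_integral_abs_det_fderiv_smul volume
      hΩhat_open.measurableSet (fun ξ hξ => (hxd ξ hξ).hasFDerivAt.hasFDerivWithinAt) hbij.injOn]
    refine setIntegral_congr_fun hΩhat_open.measurableSet fun ξ hξ => ?_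
    have hpos := hdet ξ hξ
    rw [det_fderiv_eq_det_jacMat (hxd ξ hξ), abs_of_pos hpos, smul_eq_mul, hjac_inv ξ hξ,
      sum_sq_entries_inv_eq_trace_inv_transpose_mul, trace_inv_transpose_mul_fin_two, metricG]
    field_simp
  refine ⟨henergy, ?_⟩
  rw [← henergy]
  exact (setIntegral_congr_fun hΩ_open.measurableSet hfrobenius).symm

/-- **Pullback of the Winslow functional.** For an orientation-preserving C¹ diffeomorphism
`x : Ω̂ → Ω`, the Dirichlet energy of the inverse map equals the pulled-back Winslow
integral `∫_{Ω̂} tr(G)/det J dξ`, which also equals `∫_Ω tr(G⁻¹)(x⁻¹(p)) dp`. -/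
theorem winslow_pullback
    (Ωhat Ω : Set (Fin 2 → ℝ))
    (hΩhat_open : IsOpen Ωhat) (hΩ_open : IsOpen Ω)
    (hΩhat_bdd : Bornology.IsBounded Ωhat) (hΩ_bdd : Bornology.IsBounded Ω)
    (x y : (Fin 2 → ℝ) → (Fin 2 → ℝ))
    (hx : ContDiffOn ℝ 1 x Ωhat) (hy : ContDiffOn ℝ 1 y Ω)
    (hbij : Set.BijOn x Ωhat Ω)
    (hinv_left : ∀ ξ ∈ Ωhat, y (x ξ) = ξ) (hinv_right : ∀ p ∈ Ω, x (y p) = p)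
    (hdet : ∀ ξ ∈ Ωhat, 0 < (jacMat x ξ).det)
    (hint : IntegrableOn (fun ξ => (metricG x ξ).trace / (jacMat x ξ).det) Ωhat) :
    (∫ p in Ω, ∑ i : Fin 2, ∑ j : Fin 2, (jacMat y p i j) ^ 2)
        = (∫ ξ in Ωhat, (metricG x ξ).trace / (jacMat x ξ).det)
      ∧ (∫ p in Ω, ((metricG x (y p))⁻¹).trace)
        = (∫ ξ in Ωhat, (metricG x ξ).trace / (jacMat x ξ).det) :=
  winslow_pullback_general Ωhat Ω hΩhat_open hΩ_open x y hx hy hbij hinv_left hdet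
end

section
/- (Uniform ellipticity of A along uniformly nondegenerate maps) Let J be a real 2×2 matrix and let constants 0 < c and M > 0 satisfy det J ≥ c and ‖J‖_F ≤ M. Then the matrix A(J) = [[g₂₂, −g₁₂], [−g₁₂, g₁₁]], where g_{ij} = (JᵀJ)_{ij}, is symmetric and uniformly elliptic with explicit constants: for every v ∈ ℝ², (c²/M²)‖v‖² ≤ vᵀ A(J) v ≤ M²‖v‖². In particular, if x : Ω̂ → ℝ² is C¹ with det J(x)(ξ) ≥ c > 0 and ‖J(x)(ξ)‖_F ≤ M for all ξ ∈ Ω̂, then A(∂x) is uniformly elliptic on Ω̂ with these constants. -/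
open Matrix

/-- The Frobenius norm of a `2×2` matrix. -/
noncomputable def frobNorm (J : Matrix (Fin 2) (Fin 2) ℝ) : ℝ :=
  Real.sqrt (∑ i, ∑ j, (J i j) ^ 2)

lemma Amat_core (J : Matrix (Fin 2) (Fin 2) ℝ) (c M : ℝ) (hc : 0 < c) (hM : 0 < M)
    (hdet : c ≤ J.det) (hF : frobNorm J ≤ M) :
    (Amat J).IsSymm ∧
      ∀ v : Fin 2 → ℝ,
        (c ^ 2 / M ^ 2) * (v ⬝ᵥ v) ≤ v ⬝ᵥ (Amat J).mulVec v ∧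
        v ⬝ᵥ (Amat J).mulVec v ≤ M ^ 2 * (v ⬝ᵥ v) := by
  set a := J 0 0; set b := J 0 1; set p := J 1 0; set q := J 1 1
  have hS : a ^ 2 + b ^ 2 + p ^ 2 + q ^ 2 ≤ M ^ 2 := by
    have h0 : (0:ℝ) ≤ a ^ 2 + b ^ 2 + p ^ 2 + q ^ 2 := by positivity
    have h1 : Real.sqrt (a ^ 2 + b ^ 2 + p ^ 2 + q ^ 2) ≤ M := by
      have := hF
      simpa [frobNorm, Fin.sum_univ_two, add_assoc] using this
    nlinarith [Real.sq_sqrt h0, Real.sqrt_nonneg (a ^ 2 + b ^ 2 + p ^ 2 + q ^ 2)]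
  have hd : c ≤ a * q - b * p := by
    have := hdet
    simpa [Matrix.det_fin_two] using this
  constructor
  · ext i j
    fin_cases i <;> fin_cases j <;> simp [Amat, Matrix.IsSymm]
  · intro v
    set v0 := v 0; set v1 := v 1
    have hQ : v ⬝ᵥ (Amat J).mulVec v =
        (b * v0 - a * v1) ^ 2 + (q * v0 - p * v1) ^ 2 := by
      simp [Amat, Matrix.mulVec, dotProduct, Matrix.mul_apply, Fin.sum_univ_two]
      ring
    have hv : v ⬝ᵥ v = v0 ^ 2 + v1 ^ 2 := by
      simp [dotProduct, Fin.sum_univ_two]; ring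
    rw [hQ, hv]
    constructor
    · rw [div_mul_eq_mul_div, div_le_iff₀ (by positivity)]
      nlinarith [sq_nonneg (p * (b * v0 - a * v1) - a * (q * v0 - p * v1)),
        sq_nonneg (q * (b * v0 - a * v1) - b * (q * v0 - p * v1)),
        sq_nonneg (a * (b * v0 - a * v1) + p * (q * v0 - p * v1)),
        sq_nonneg (b * (b * v0 - a * v1) + q * (q * v0 - p * v1)),
        sq_nonneg (b * v0 - a * v1), sq_nonneg (q * v0 - p * v1),
        sq_nonneg v0, sq_nonneg v1, mul_pos hc hc, hc.le, hM.le,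
        mul_le_mul hd hd hc.le (le_trans hc.le hd)]
    · nlinarith [sq_nonneg (a * v0 + b * v1), sq_nonneg (p * v0 + q * v1),
        sq_nonneg v0, sq_nonneg v1]

/-- **Uniform ellipticity of `A` along uniformly nondegenerate maps.** If `det J ≥ c > 0`
and `‖J‖_F ≤ M`, then `A(J)` is symmetric and `(c²/M²)‖v‖² ≤ vᵀA(J)v ≤ M²‖v‖²`; in
particular this holds pointwise for the Jacobian of a C¹ map satisfying these bounds. -/
theorem Amat_uniformly_elliptic :
    (∀ (J : Matrix (Fin 2) (Fin 2) ℝ) (c M : ℝ), 0 < c → 0 < M →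
      c ≤ J.det → frobNorm J ≤ M →
      (Amat J).IsSymm ∧
        ∀ v : Fin 2 → ℝ,
          (c ^ 2 / M ^ 2) * (v ⬝ᵥ v) ≤ v ⬝ᵥ (Amat J).mulVec v ∧
          v ⬝ᵥ (Amat J).mulVec v ≤ M ^ 2 * (v ⬝ᵥ v))
    ∧
    (∀ (Ωhat : Set (Fin 2 → ℝ)) (x : (Fin 2 → ℝ) → (Fin 2 → ℝ)) (c M : ℝ),
      0 < c → 0 < M → ContDiffOn ℝ 1 x Ωhat →
      (∀ ξ ∈ Ωhat, c ≤ (jacMat x ξ).det) →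
      (∀ ξ ∈ Ωhat, frobNorm (jacMat x ξ) ≤ M) →
      ∀ ξ ∈ Ωhat, (Amat (jacMat x ξ)).IsSymm ∧
        ∀ v : Fin 2 → ℝ,
          (c ^ 2 / M ^ 2) * (v ⬝ᵥ v) ≤ v ⬝ᵥ (Amat (jacMat x ξ)).mulVec v ∧
          v ⬝ᵥ (Amat (jacMat x ξ)).mulVec v ≤ M ^ 2 * (v ⬝ᵥ v)) := by
  refine ⟨fun J c M hc hM hd hF => Amat_core J c M hc hM hd hF,
    fun Ωhat x c M hc hM _ hd hF ξ hξ =>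
      Amat_core (jacMat x ξ) c M hc hM (hd ξ hξ) (hF ξ hξ)⟩
end
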